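/- arXiv:1809.07501 — 4 statements merged into one kernel-verified Lean document; each statement's English description precedes it below -/
import Mathlib

section
/- Every involutive isometry of the lattice 2(−E8) = (−E8) ⊕ (−E8) that maps each standard basis vector to plus or minus a standard basis vector is one of the following six maps (writing elements as pairs (x₁,x₂) with x₁ in the first and x₂ in the second summand): (x₁,x₂) ↦ (x₁,x₂), (x₁,x₂) ↦ (−x₁,x₂), (x₁,x₂) ↦ (x₁,−x₂), (x₁,x₂) ↦ (−x₁,−x₂), (x₁,x₂) ↦ (x₂,x₁), and (x₁,x₂) ↦ (−x₂,−x₁). -/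
open Matrix

/-- The Gram matrix of the lattice `−E8`. -/
def GramE8 : Matrix (Fin 8) (Fin 8) ℤ :=
  !![-2,0,1,0,0,0,0,0;
     0,-2,0,1,0,0,0,0;
     1,0,-2,1,0,0,0,0;
     0,1,1,-2,1,0,0,0;
     0,0,0,1,-2,1,0,0;
     0,0,0,0,1,-2,1,0;
     0,0,0,0,0,1,-2,1;
     0,0,0,0,0,0,1,-2]

/-- The Gram matrix of `2(−E8) = (−E8) ⊕ (−E8)`. -/
def Gram2E8 : Matrix (Fin 16) (Fin 16) ℤ :=
  Matrix.of fun i j =>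
    if h : i.val < 8 then
      if h' : j.val < 8 then GramE8 ⟨i.val, h⟩ ⟨j.val, h'⟩ else 0
    else
      if h' : j.val < 8 then 0
      else GramE8 ⟨i.val - 8, by have := i.isLt; omega⟩ ⟨j.val - 8, by have := j.isLt; omega⟩

/-- `M` is an isometry of the lattice `(ℤⁿ, G)`. -/
def IsIsometry {n : ℕ} (G M : Matrix (Fin n) (Fin n) ℤ) : Prop :=
  IsUnit M.det ∧ Mᵀ * G * M = G

/-- `M` maps each standard basis vector to plus or minus a standard basis vector. -/
def SignedBasis {n : ℕ} (M : Matrix (Fin n) (Fin n) ℤ) : Prop :=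
  ∀ j : Fin n, ∃ i : Fin n, ∃ ε : ℤ, (ε = 1 ∨ ε = -1) ∧
    M.mulVec (Pi.single j 1) = ε • Pi.single i 1

/-- The map `(x₁,x₂) ↦ (a·x₁, b·x₂)` on `2(−E8)` as a matrix. -/
def diag2E8 (a b : ℤ) : Matrix (Fin 16) (Fin 16) ℤ :=
  Matrix.of fun i j => if i = j then (if i.val < 8 then a else b) else 0

/-- The map `(x₁,x₂) ↦ (x₂,x₁)` on `2(−E8)` as a matrix. -/
def swap2E8 : Matrix (Fin 16) (Fin 16) ℤ :=
  Matrix.of fun i j => if i.val + 8 = j.val ∨ j.val + 8 = i.val then 1 else 0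

/-!
A signed permutation matrix `M eⱼ = εⱼ e_{σ j}` is an isometry of `(ℤ¹⁶, G)` iff
`εⱼ εₖ G (σ j) (σ k) = G j k`. Since the entries of `G` lie in `{-2, 0, 1}` and no nonzero
one has its negative there, this forces `G (σ j) (σ k) = G j k`, and `εⱼ = εₖ` along every
edge of the Dynkin diagram `E8 ⊔ E8`; so `ε` is constant on each summand. The automorphism
`σ` preserves the walk sums `G⁴ 𝟙`, which already separate the eight vertices of `E8`, hence
`σ j ∈ {j, j + 8}` (in `Fin 16`, so `j + 8` is the copy of `j` in the other summand), and
connectedness of `E8` makes this choice the same for all `j`. In the swap case `M² = 1`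
forces the two signs to agree.
-/

section SignedPerm

variable {n R : Type*} [DecidableEq n]

def signedPerm [Zero R] (σ : n → n) (ε : n → R) : Matrix n n R :=
  of fun i j => if i = σ j then ε j else 0

theorem signedPerm_eq_one [Zero R] [One R] {σ : n → n} {ε : n → R} (h : signedPerm σ ε = 1)
    {j : n} (hj : ε j ≠ 0) : σ j = j ∧ ε j = 1 := by
  have hentry := congrFun (congrFun h (σ j)) j
  simp only [signedPerm, of_apply, if_true, one_apply] at hentry
  by_cases hσ : σ j = j
  · exact ⟨hσ, by simpa [hσ] using hentry⟩
  · exact absurd (by simpa [hσ] using hentry) hj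

variable [Fintype n] [Semiring R]

theorem transpose_signedPerm_mul_mul (σ : n → n) (ε : n → R) (G : Matrix n n R) :
    (signedPerm σ ε)ᵀ * G * signedPerm σ ε = of fun j k => ε j * G (σ j) (σ k) * ε k := by
  ext j k
  simp [signedPerm, mul_apply, ite_mul, mul_ite, Finset.sum_ite_eq', mul_assoc]

theorem signedPerm_mul_signedPerm (σ τ : n → n) (ε δ : n → R) :
    signedPerm σ ε * signedPerm τ δ = signedPerm (σ ∘ τ) (fun j => ε (τ j) * δ j) := by
  ext i j
  simp [signedPerm, mul_apply, ite_mul, mul_ite, Finset.sum_ite_eq']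

end SignedPerm

theorem SignedBasis.exists_eq_signedPerm {m : ℕ} {M : Matrix (Fin m) (Fin m) ℤ}
    (h : SignedBasis M) :
    ∃ σ ε, (∀ j, ε j = 1 ∨ ε j = -1) ∧ M = signedPerm σ ε := by
  choose σ ε hε hM using h
  refine ⟨σ, ε, hε, ?_⟩
  ext i j
  simpa [signedPerm, mulVec_single, Pi.single_apply, eq_comm] using congrFun (hM j) i

section Invariant

variable {n R : Type*} [Fintype n] [Semiring R] {G : Matrix n n R} {σ : n → n}

theorem mulVec_apply_of_invariant (hσ : σ.Bijective) (hG : ∀ i j, G (σ i) (σ j) = G i j)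
    {v : n → R} (hv : ∀ i, v (σ i) = v i) (i : n) : (G *ᵥ v) (σ i) = (G *ᵥ v) i := by
  simp only [mulVec, dotProduct]
  rw [← hσ.sum_comp]
  simp only [hG, hv]

theorem pow_mulVec_one_apply_of_invariant [DecidableEq n] (hσ : σ.Bijective)
    (hG : ∀ i j, G (σ i) (σ j) = G i j) (k : ℕ) (i : n) :
    (G ^ k *ᵥ 1) (σ i) = (G ^ k *ᵥ 1) i := by
  induction k generalizing i with
  | zero => simp
  | succ k ih =>
    rw [pow_succ', ← mulVec_mulVec]
    exact mulVec_apply_of_invariant hσ hG ih i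

end Invariant

section GramE8

theorem gram2E8_eq (j k : Fin 16) :
    Gram2E8 j k = -2 ∨ Gram2E8 j k = 0 ∨ Gram2E8 j k = 1 := by
  revert k; fin_cases j <;> decide

theorem gram2E8_add_eight_eq_zero {j k : Fin 16} (h : Gram2E8 j k ≠ 0) :
    Gram2E8 (j + 8) k = 0 ∧ Gram2E8 j (k + 8) = 0 := by
  revert k; fin_cases j <;> decide

-- On each summand `G⁴ 𝟙` is `(7, 28, 8, -35, 20, -1, -13, 14)`.
theorem eq_of_gram2E8_pow_mulVec_one_eq :
    ∀ i j : Fin 16, (Gram2E8 ^ 4 *ᵥ 1) i = (Gram2E8 ^ 4 *ᵥ 1) j → i = j ∨ i = j + 8 := by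
  decide

theorem eq_ite_of_gram2E8_eq_one {α : Type*} (f : Fin 16 → α)
    (hf : ∀ j k, Gram2E8 j k = 1 → f j = f k) (j : Fin 16) :
    f j = if j.val < 8 then f 0 else f 8 := by
  fin_cases j <;>
    simp [hf 0 2 (by decide), hf 1 3 (by decide), hf 2 3 (by decide), hf 3 4 (by decide),
      hf 4 5 (by decide), hf 5 6 (by decide), hf 6 7 (by decide), hf 8 10 (by decide),
      hf 9 11 (by decide), hf 10 11 (by decide), hf 11 12 (by decide), hf 12 13 (by decide),
      hf 13 14 (by decide), hf 14 15 (by decide)]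

theorem eq_id_or_add_eight_of_gram2E8_invariant {σ : Fin 16 → Fin 16} (hσ : σ.Bijective)
    (hG : ∀ j k, Gram2E8 (σ j) (σ k) = Gram2E8 j k) : σ = id ∨ σ = (· + 8) := by
  have hσ8 (j : Fin 16) : σ j = j ∨ σ j = j + 8 :=
    eq_of_gram2E8_pow_mulVec_one_eq _ _ (pow_mulVec_one_apply_of_invariant hσ hG 4 j)
  have hshift : ∀ j k, Gram2E8 j k = 1 → σ j - j = σ k - k := by
    intro j k hjk
    have hblock := gram2E8_add_eight_eq_zero (hjk ▸ one_ne_zero)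
    rcases hσ8 j with hj | hj <;> rcases hσ8 k with hk | hk
    · simp [hj, hk]
    · simpa [hj, hk, hjk, hblock.2] using hG j k
    · simpa [hj, hk, hjk, hblock.1] using hG j k
    · simp [hj, hk]
  have h08 : σ 8 - 8 = σ 0 := by
    have hne : σ 0 ≠ σ 8 := hσ.1.ne (by decide)
    rcases hσ8 0 with h0 | h0 <;> rcases hσ8 8 with h8 | h8 <;>
      rw [h0, h8] at hne ⊢ <;> revert hne <;> decide
  have hconst (j : Fin 16) : σ j = j + σ 0 := by
    have := eq_ite_of_gram2E8_eq_one (fun j => σ j - j) hshift j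
    split_ifs at this <;> simp only [sub_zero, h08] at this <;> rw [← this, add_sub_cancel]
  rcases hσ8 0 with h0 | h0
  · left; funext j; simpa [h0] using hconst j
  · right; funext j; simpa [h0] using hconst j

end GramE8

theorem eq_and_sign_eq_of_mul_mul_eq {a b x y : ℤ} (ha : a = 1 ∨ a = -1) (hb : b = 1 ∨ b = -1)
    (hx : x = -2 ∨ x = 0 ∨ x = 1) (hy : y = -2 ∨ y = 0 ∨ y = 1) (h : a * x * b = y) :
    x = y ∧ (y ≠ 0 → a = b) := by
  rcases ha with rfl | rfl <;> rcases hb with rfl | rfl <;> omega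

theorem signedPerm_id_eq_diag2E8 (a b : ℤ) :
    signedPerm id (fun j : Fin 16 => if j.val < 8 then a else b) = diag2E8 a b := by
  ext i j
  by_cases h : i = j <;> simp [signedPerm, diag2E8, h]

theorem diag2E8_self (a : ℤ) : diag2E8 a a = a • 1 := by
  ext i j
  by_cases h : i = j <;> simp [diag2E8, one_apply, h]

theorem swap2E8_apply (i j : Fin 16) : swap2E8 i j = if i = j + 8 then 1 else 0 := by
  revert j; fin_cases i <;> decide

theorem signedPerm_add_eight (a : ℤ) :
    signedPerm (· + 8 : Fin 16 → Fin 16) (fun _ => a) = a • swap2E8 := by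
  ext i j
  simp [signedPerm, swap2E8_apply]

theorem stmt4 (M : Matrix (Fin 16) (Fin 16) ℤ)
    (hiso : IsIsometry Gram2E8 M) (hinv : M * M = 1) (hsb : SignedBasis M) :
    M = 1 ∨ M = diag2E8 (-1) 1 ∨ M = diag2E8 1 (-1) ∨ M = -1 ∨
      M = swap2E8 ∨ M = -swap2E8 := by
  obtain ⟨σ, ε, hε, rfl⟩ := hsb.exists_eq_signedPerm
  have hε0 (j : Fin 16) : ε j ≠ 0 := by rcases hε j with h | h <;> simp [h]
  rw [signedPerm_mul_signedPerm] at hinv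
  have hsq (j : Fin 16) := signedPerm_eq_one hinv (mul_ne_zero (hε0 (σ j)) (hε0 j))
  have hrel (j k : Fin 16) : ε j * Gram2E8 (σ j) (σ k) * ε k = Gram2E8 j k := by
    have h := hiso.2
    rw [transpose_signedPerm_mul_mul] at h
    exact congrFun₂ h j k
  have hG (j k : Fin 16) := eq_and_sign_eq_of_mul_mul_eq (hε j) (hε k) (gram2E8_eq _ _)
    (gram2E8_eq j k) (hrel j k)
  have hεblock := eq_ite_of_gram2E8_eq_one ε fun j k h => (hG j k).2 (by rw [h]; decide)
  have hσ : Function.Involutive σ := fun j => (hsq j).1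
  rcases eq_id_or_add_eight_of_gram2E8_invariant hσ.bijective (fun j k => (hG j k).1)
    with rfl | rfl
  · rw [funext hεblock, signedPerm_id_eq_diag2E8]
    rcases hε 0 with h0 | h0 <;> rcases hε 8 with h8 | h8 <;> simp [h0, h8, diag2E8_self]
  · have h80 : ε 8 = ε 0 := by
      have h := (hsq 0).2
      simp only [zero_add] at h
      rcases hε 0 with h0 | h0 <;> rcases hε 8 with h8 | h8 <;> simp [h0, h8] at h ⊢
    have hεconst : ε = fun _ => ε 0 := funext fun j => by
      rw [hεblock j]; split_ifs <;> simp [h80]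
    rw [hεconst, signedPerm_add_eight]
    rcases hε 0 with h0 | h0 <;> simp [h0]
end

section
/- Let τ be the isometry of 3H defined by τ(u_kˡ) = u_k^{4−l} for k ∈ {1,2} and l ∈ {1,2,3}. Then: (a) for all i₁, i₂ ∈ {1,…,6}, the involutions ρ₁^{i₁} and τ ∘ ρ₁^{i₂} ∘ τ commute; (b) for i₂ ∈ {1,…,6}, the involution ρ₁⁷ commutes with τ ∘ ρ₁^{i₂} ∘ τ if and only if i₂ ∉ {2,5}. -/
open Matrix

/-- The seven involutions ρ₁¹, …, ρ₁⁷ of `3H` (index `0` and `≥ 8` are dummies). -/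
def rho1 : ℕ → Matrix (Fin 6) (Fin 6) ℤ
  | 1 => !![1,0,0,0,0,0; 0,1,0,0,0,0; 0,0,-1,0,0,0; 0,0,0,-1,0,0; 0,0,0,0,-1,0; 0,0,0,0,0,-1]
  | 2 => !![1,0,0,0,0,0; 0,1,0,0,0,0; 0,0,0,-1,0,0; 0,0,-1,0,0,0; 0,0,0,0,-1,0; 0,0,0,0,0,-1]
  | 3 => !![1,0,0,0,0,0; 0,1,0,0,0,0; 0,0,0,-1,0,0; 0,0,-1,0,0,0; 0,0,0,0,0,-1; 0,0,0,0,-1,0]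
  | 4 => !![0,1,0,0,0,0; 1,0,0,0,0,0; 0,0,-1,0,0,0; 0,0,0,-1,0,0; 0,0,0,0,-1,0; 0,0,0,0,0,-1]
  | 5 => !![0,1,0,0,0,0; 1,0,0,0,0,0; 0,0,0,-1,0,0; 0,0,-1,0,0,0; 0,0,0,0,-1,0; 0,0,0,0,0,-1]
  | 6 => !![0,1,0,0,0,0; 1,0,0,0,0,0; 0,0,0,-1,0,0; 0,0,-1,0,0,0; 0,0,0,0,0,-1; 0,0,0,0,-1,0]
  | 7 => !![0,0,1,0,0,0; 0,0,0,1,0,0; 1,0,0,0,0,0; 0,1,0,0,0,0; 0,0,0,0,-1,0; 0,0,0,0,0,-1]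
  | _ => 1

/-- The isometry `τ` of `3H` with `τ(u_kˡ) = u_k^{4−l}`: it interchanges the first and
third hyperbolic planes and is the identity on the second one. -/
def tau3H : Matrix (Fin 6) (Fin 6) ℤ :=
  !![0,0,0,0,1,0; 0,0,0,0,0,1; 0,0,1,0,0,0; 0,0,0,1,0,0; 1,0,0,0,0,0; 0,1,0,0,0,0]

theorem stmt9 :
    (∀ i₁ ∈ Finset.Icc 1 6, ∀ i₂ ∈ Finset.Icc 1 6,
      rho1 i₁ * (tau3H * rho1 i₂ * tau3H) = (tau3H * rho1 i₂ * tau3H) * rho1 i₁) ∧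
    (∀ i₂ ∈ Finset.Icc 1 6,
      (rho1 7 * (tau3H * rho1 i₂ * tau3H) = (tau3H * rho1 i₂ * tau3H) * rho1 7 ↔
        ¬(i₂ = 2 ∨ i₂ = 5))) := by
  constructor
  · decide
  · decide
end

section
/- In L ⊗ ℝ (the real extension of the K3 lattice L with bilinear form B), set z = w₁ + w₂ + w₃ + w₄, x = w₁ + w₂ − w₃ − w₄ and y = √2·(w₅ + w₆). Then B(x,x) = B(y,y) = B(z,z) = 4, the three vectors are pairwise B-orthogonal, and the set {d ∈ ℤ²² : B(d,x) = B(d,y) = B(d,z) = 0} is exactly the ℤ-span of the 19 vectors w₁ − w₂, w₃ − w₄, w₅ − w₆, w₇, w₈, …, w₂₂. -/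
open Matrix

/-- The Gram matrix of `3H`: block-diagonal sum of three hyperbolic planes. -/
def Gram3H : Matrix (Fin 6) (Fin 6) ℤ :=
  Matrix.of fun i j => if i.val / 2 = j.val / 2 ∧ i ≠ j then 1 else 0

/-- The Gram matrix of the K3 lattice `L = 3H ⊕ 2(−E8)`. -/
def GramL : Matrix (Fin 22) (Fin 22) ℤ :=
  Matrix.of fun i j =>
    if h : i.val < 6 then
      (if h' : j.val < 6 then Gram3H ⟨i.val, h⟩ ⟨j.val, h'⟩ else 0)
    else if h2 : i.val < 14 then
      (if h' : 6 ≤ j.val ∧ j.val < 14 then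
        GramE8 ⟨i.val - 6, by omega⟩ ⟨j.val - 6, by omega⟩ else 0)
    else
      (if h' : 14 ≤ j.val then
        GramE8 ⟨i.val - 14, by have := i.isLt; omega⟩
          ⟨j.val - 14, by have := j.isLt; omega⟩ else 0)

/-- The standard basis vectors of the K3 lattice: `w (i-1) = wᵢ`. -/
def w22 (i : Fin 22) : Fin 22 → ℤ := Pi.single i 1

/-- The real Gram matrix of the K3 lattice. -/
noncomputable def GramLR : Matrix (Fin 22) (Fin 22) ℝ := GramL.map (Int.cast : ℤ → ℝ)

/-- The standard basis vectors of `L ⊗ ℝ = ℝ²²`. -/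
noncomputable def w22R (i : Fin 22) : Fin 22 → ℝ := Pi.single i 1

/-! The vectors `x`, `y/√2`, `z` lie in the `3H` summand and are fixed by its Gram matrix, which
swaps the two basis vectors of each hyperbolic plane. Hence pairing an integral vector `d` with
them is a plain dot product: `d₁ + d₂ - d₃ - d₄`, `√2 (d₅ + d₆)` and `d₁ + d₂ + d₃ + d₄`. So `d` is
orthogonal to all three exactly when `d₁ + d₂ = d₃ + d₄ = d₅ + d₆ = 0`, and these vectors are
visibly the integral combinations of `w₁ - w₂`, `w₃ - w₄`, `w₅ - w₆`, `w₇`, …, `w₂₂`. -/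

theorem RingHom.map_dotProduct_mulVec {m n R S : Type*} [Fintype m] [Fintype n]
    [NonAssocSemiring R] [NonAssocSemiring S] (f : R →+* S) (u : m → R) (M : Matrix m n R)
    (v : n → R) :
    f (u ⬝ᵥ M *ᵥ v) = (f ∘ u) ⬝ᵥ M.map f *ᵥ (f ∘ v) := by
  rw [f.map_dotProduct]
  congr 1
  ext i
  exact f.map_mulVec M v i

theorem intCast_dotProduct_GramLR_mulVec (u v : Fin 22 → ℤ) :
    (fun i => (u i : ℝ)) ⬝ᵥ GramLR *ᵥ (fun i => (v i : ℝ)) = ((u ⬝ᵥ GramL *ᵥ v : ℤ) : ℝ) :=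
  ((Int.castRingHom ℝ).map_dotProduct_mulVec u GramL v).symm

def xInt : Fin 22 → ℤ := w22 0 + w22 1 - w22 2 - w22 3

def yInt : Fin 22 → ℤ := w22 4 + w22 5

def zInt : Fin 22 → ℤ := w22 0 + w22 1 + w22 2 + w22 3

theorem GramL_mulVec_xInt : GramL *ᵥ xInt = xInt := by decide

theorem GramL_mulVec_yInt : GramL *ᵥ yInt = yInt := by decide

theorem GramL_mulVec_zInt : GramL *ᵥ zInt = zInt := by decide

theorem intCast_xInt : (fun i => (xInt i : ℝ)) = w22R 0 + w22R 1 - w22R 2 - w22R 3 := by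
  ext i
  simp [xInt, w22, w22R, Pi.single_apply]

theorem intCast_yInt : (fun i => (yInt i : ℝ)) = w22R 4 + w22R 5 := by
  ext i
  simp [yInt, w22, w22R, Pi.single_apply]

theorem intCast_zInt : (fun i => (zInt i : ℝ)) = w22R 0 + w22R 1 + w22R 2 + w22R 3 := by
  ext i
  simp [zInt, w22, w22R, Pi.single_apply]

theorem intCast_dotProduct_GramLR_mulVec_xInt (d : Fin 22 → ℤ) :
    (fun i => (d i : ℝ)) ⬝ᵥ GramLR *ᵥ (fun i => (xInt i : ℝ)) =
      ((d 0 + d 1 - d 2 - d 3 : ℤ) : ℝ) := by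
  rw [intCast_dotProduct_GramLR_mulVec, GramL_mulVec_xInt]
  simp [xInt, w22, dotProduct_add, dotProduct_sub]

theorem intCast_dotProduct_GramLR_mulVec_yInt (d : Fin 22 → ℤ) :
    (fun i => (d i : ℝ)) ⬝ᵥ GramLR *ᵥ (fun i => (yInt i : ℝ)) =
      ((d 4 + d 5 : ℤ) : ℝ) := by
  rw [intCast_dotProduct_GramLR_mulVec, GramL_mulVec_yInt]
  simp [yInt, w22, dotProduct_add]

theorem intCast_dotProduct_GramLR_mulVec_zInt (d : Fin 22 → ℤ) :
    (fun i => (d i : ℝ)) ⬝ᵥ GramLR *ᵥ (fun i => (zInt i : ℝ)) =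
      ((d 0 + d 1 + d 2 + d 3 : ℤ) : ℝ) := by
  rw [intCast_dotProduct_GramLR_mulVec, GramL_mulVec_zInt]
  simp [zInt, w22, dotProduct_add]

def pairSumKer : Submodule ℤ (Fin 22 → ℤ) where
  carrier := {d | d 0 + d 1 = 0 ∧ d 2 + d 3 = 0 ∧ d 4 + d 5 = 0}
  add_mem' := by
    rintro a b ⟨ha₁, ha₂, ha₃⟩ ⟨hb₁, hb₂, hb₃⟩
    simp only [Set.mem_ofPred_eq, Pi.add_apply]
    omega
  zero_mem' := by simp
  smul_mem' := by
    rintro c d ⟨h₁, h₂, h₃⟩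
    simp only [Set.mem_ofPred_eq, Pi.smul_apply, smul_eq_mul, ← mul_add, h₁, h₂, h₃, mul_zero,
      and_self]

theorem mem_pairSumKer {d : Fin 22 → ℤ} :
    d ∈ pairSumKer ↔ d 0 + d 1 = 0 ∧ d 2 + d 3 = 0 ∧ d 4 + d 5 = 0 :=
  Iff.rfl

theorem eq_sum_of_mem_pairSumKer {d : Fin 22 → ℤ} (hd : d ∈ pairSumKer) :
    d = d 0 • (w22 0 - w22 1) + d 2 • (w22 2 - w22 3) + d 4 • (w22 4 - w22 5) +
      ∑ i ∈ Finset.univ.filter (fun i : Fin 22 => 6 ≤ i.val), d i • w22 i := by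
  obtain ⟨h₁, h₂, h₃⟩ := hd
  ext j
  simp only [w22, Pi.add_apply, Pi.smul_apply, Pi.sub_apply, Finset.sum_apply, Pi.single_apply,
    smul_eq_mul, mul_ite, mul_one, mul_zero]
  fin_cases j <;> simp <;> omega

theorem span_eq_pairSumKer :
    Submodule.span ℤ {v : Fin 22 → ℤ | v = w22 0 - w22 1 ∨ v = w22 2 - w22 3 ∨
      v = w22 4 - w22 5 ∨ ∃ i : Fin 22, 6 ≤ i.val ∧ v = w22 i} = pairSumKer := by
  refine le_antisymm (Submodule.span_le.mpr ?_) fun d hd => ?_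
  · rintro v (rfl | rfl | rfl | ⟨i, hi, rfl⟩) <;> rw [SetLike.mem_coe, mem_pairSumKer]
    · decide
    · decide
    · decide
    · have hvanish : ∀ j : Fin 22, j.val < 6 → w22 i j = 0 := fun j hj =>
        Pi.single_eq_of_ne (by omega) 1
      simp [hvanish]
  · rw [eq_sum_of_mem_pairSumKer hd]
    refine add_mem (add_mem (add_mem ?_ ?_) ?_) (Submodule.sum_mem _ fun i hi => ?_) <;>
      refine Submodule.smul_mem _ _ (Submodule.subset_span ?_)
    · exact Or.inl rfl
    · exact Or.inr (Or.inl rfl)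
    · exact Or.inr (Or.inr (Or.inl rfl))
    · exact Or.inr (Or.inr (Or.inr ⟨i, (Finset.mem_filter.mp hi).2, rfl⟩))

theorem stmt11 (x y z : Fin 22 → ℝ)
    (hz : z = w22R 0 + w22R 1 + w22R 2 + w22R 3)
    (hx : x = w22R 0 + w22R 1 - w22R 2 - w22R 3)
    (hy : y = Real.sqrt 2 • (w22R 4 + w22R 5)) :
    x ⬝ᵥ GramLR.mulVec x = 4 ∧
    y ⬝ᵥ GramLR.mulVec y = 4 ∧
    z ⬝ᵥ GramLR.mulVec z = 4 ∧
    x ⬝ᵥ GramLR.mulVec y = 0 ∧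
    x ⬝ᵥ GramLR.mulVec z = 0 ∧
    y ⬝ᵥ GramLR.mulVec z = 0 ∧
    ∀ d : Fin 22 → ℤ,
      ((fun i => (d i : ℝ)) ⬝ᵥ GramLR.mulVec x = 0 ∧
       (fun i => (d i : ℝ)) ⬝ᵥ GramLR.mulVec y = 0 ∧
       (fun i => (d i : ℝ)) ⬝ᵥ GramLR.mulVec z = 0) ↔
      d ∈ Submodule.span ℤ
        {v : Fin 22 → ℤ | v = w22 0 - w22 1 ∨ v = w22 2 - w22 3 ∨ v = w22 4 - w22 5 ∨
          ∃ i : Fin 22, 6 ≤ i.val ∧ v = w22 i} := by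
  rw [← intCast_xInt] at hx
  rw [← intCast_yInt] at hy
  rw [← intCast_zInt] at hz
  subst hx hy hz
  have hsqrt : Real.sqrt 2 * Real.sqrt 2 = 2 := Real.mul_self_sqrt zero_le_two
  simp only [mulVec_smul, dotProduct_smul, smul_dotProduct, smul_eq_mul,
    intCast_dotProduct_GramLR_mulVec_xInt, intCast_dotProduct_GramLR_mulVec_yInt,
    intCast_dotProduct_GramLR_mulVec_zInt]
  refine ⟨?_, ?_, ?_, ?_, ?_, ?_, fun d => ?_⟩
  rotate_right
  · rw [span_eq_pairSumKer, mem_pairSumKer]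
    simp only [Int.cast_eq_zero, mul_eq_zero, Real.sqrt_ne_zero'.mpr zero_lt_two, false_or]
    omega
  all_goals norm_num +decide [xInt, yInt, zInt, w22, ← mul_assoc, hsqrt]
end

section
/- Let i₂ ∈ {1,3,4,6} and j₁, j₂ ∈ {1,2,3,4} with (j₁,j₂) ∉ {(2,4),(4,2)}. Define ρ¹ = ρ₁⁷ ⊕ ρ₂^{j₁} and ρ² = (τ ∘ ρ₁^{i₂} ∘ τ) ⊕ ρ₂^{j₂} on the K3 lattice L = 3H ⊕ 2(−E8). Then ρ¹ and ρ² are commuting involutive isometries of L, and for the vectors x = w₁ + w₂ − w₃ − w₄, y = w₅ + w₆, z = w₁ + w₂ + w₃ + w₄ one has: ρ¹(x) = −x, ρ¹(y) = −y, ρ¹(z) = z, ρ²(x) = −x, ρ²(y) = y, ρ²(z) = −z; moreover in L ⊗ ℝ the triple (x, √2·y, z) is pairwise B-orthogonal with B(x,x) = B(√2·y, √2·y) = B(z,z) = 4. -/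
open Matrix

/-- The four involutions ρ₂¹, …, ρ₂⁴ of `2(−E8)` (index `0` and `≥ 5` are dummies). -/
def rho2 : ℕ → Matrix (Fin 16) (Fin 16) ℤ
  | 1 => 1
  | 2 => diag2E8 (-1) 1
  | 3 => -1
  | 4 => swap2E8
  | _ => 1

/-- The direct sum `A ⊕ B` of a `6×6` and a `16×16` matrix, acting on `L = 3H ⊕ 2(−E8)`. -/
def dsum (A : Matrix (Fin 6) (Fin 6) ℤ) (B : Matrix (Fin 16) (Fin 16) ℤ) :
    Matrix (Fin 22) (Fin 22) ℤ :=
  Matrix.of fun i j =>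
    if h : i.val < 6 then
      (if h' : j.val < 6 then A ⟨i.val, h⟩ ⟨j.val, h'⟩ else 0)
    else
      (if h' : j.val < 6 then 0
       else B ⟨i.val - 6, by have := i.isLt; omega⟩ ⟨j.val - 6, by have := j.isLt; omega⟩)

/-! The two involutions are block sums `A ⊕ B` over `L = 3H ⊕ 2(−E8)`, so being involutive
isometries and commuting can be checked blockwise, and `x`, `y`, `z` lie in `3H`. On
`2(−E8) = (−E8) ⊕ (−E8)` every `ρ₂ʲ` is `1`, `−1`, `(−1) ⊕ 1` or the interchange of the two
summands; each of these is an involutive isometry, and the only non-commuting pair is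
`(−1) ⊕ 1` with the interchange. What remains is arithmetic with `6 × 6` integer matrices. -/

section BlockSum

variable {R : Type*} [Semiring R] {m n : ℕ}

def blockSum (A : Matrix (Fin m) (Fin m) R) (B : Matrix (Fin n) (Fin n) R) :
    Matrix (Fin (m + n)) (Fin (m + n)) R :=
  reindex finSumFinEquiv finSumFinEquiv (fromBlocks A 0 0 B)

variable (A C : Matrix (Fin m) (Fin m) R) (B D : Matrix (Fin n) (Fin n) R)

@[simp]
theorem blockSum_castAdd_castAdd (i j : Fin m) :
    blockSum A B (Fin.castAdd n i) (Fin.castAdd n j) = A i j := by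
  simp [blockSum]

@[simp]
theorem blockSum_castAdd_natAdd (i : Fin m) (j : Fin n) :
    blockSum A B (Fin.castAdd n i) (Fin.natAdd m j) = 0 := by
  simp [blockSum]

@[simp]
theorem blockSum_natAdd_castAdd (i : Fin n) (j : Fin m) :
    blockSum A B (Fin.natAdd m i) (Fin.castAdd n j) = 0 := by
  simp [blockSum]

@[simp]
theorem blockSum_natAdd_natAdd (i j : Fin n) :
    blockSum A B (Fin.natAdd m i) (Fin.natAdd m j) = B i j := by
  simp [blockSum]

theorem blockSum_mul : blockSum A B * blockSum C D = blockSum (A * C) (B * D) := by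
  simp [blockSum, fromBlocks_multiply]

theorem blockSum_one :
    blockSum (1 : Matrix (Fin m) (Fin m) R) (1 : Matrix (Fin n) (Fin n) R) = 1 := by
  simp [blockSum]

theorem blockSum_transpose : (blockSum A B)ᵀ = blockSum Aᵀ Bᵀ := by
  simp [blockSum, fromBlocks_transpose]

variable {A C B D}

theorem blockSum_mul_self_eq_one (hA : A * A = 1) (hB : B * B = 1) :
    blockSum A B * blockSum A B = 1 := by
  rw [blockSum_mul, hA, hB, blockSum_one]

theorem Commute.blockSum (hAC : Commute A C) (hBD : Commute B D) :
    Commute (blockSum A B) (blockSum C D) := by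
  rw [Commute, SemiconjBy, blockSum_mul, blockSum_mul, hAC.eq, hBD.eq]

theorem blockSum_mulVec_append (v : Fin m → R) (w : Fin n → R) :
    blockSum A B *ᵥ Fin.append v w = Fin.append (A *ᵥ v) (B *ᵥ w) := by
  have : Fin.append v w ∘ finSumFinEquiv = Sum.elim v w := by ext (i | i) <;> simp
  ext i
  refine Fin.addCases (fun i => ?_) (fun i => ?_) i <;>
    simp [blockSum, submatrix_mulVec_equiv, fromBlocks_mulVec, this]

theorem append_neg {α : Type*} [Neg α] (v : Fin m → α) (w : Fin n → α) :
    Fin.append (-v) (-w) = -Fin.append v w := by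
  ext i
  refine Fin.addCases (fun i => ?_) (fun i => ?_) i <;> simp

theorem append_dotProduct_append (v v' : Fin m → R) (w w' : Fin n → R) :
    Fin.append v w ⬝ᵥ Fin.append v' w' = v ⬝ᵥ v' + w ⬝ᵥ w' := by
  simp [dotProduct, Fin.sum_univ_add]

def blockSwap : Matrix (Fin (n + n)) (Fin (n + n)) R :=
  reindex finSumFinEquiv finSumFinEquiv (fromBlocks 0 1 1 0)

theorem blockSwap_transpose :
    (blockSwap : Matrix (Fin (n + n)) (Fin (n + n)) R)ᵀ = blockSwap := by
  simp [blockSwap, fromBlocks_transpose]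

theorem blockSwap_mul_self :
    (blockSwap : Matrix (Fin (n + n)) (Fin (n + n)) R) * blockSwap = 1 := by
  simp [blockSwap, fromBlocks_multiply]

theorem blockSwap_mul_blockSum_mul_blockSwap (A B : Matrix (Fin n) (Fin n) R) :
    blockSwap * blockSum A B * blockSwap = blockSum B A := by
  simp [blockSwap, blockSum, fromBlocks_multiply]

end BlockSum

theorem det_blockSum {R : Type*} [CommRing R] {m n : ℕ} (A : Matrix (Fin m) (Fin m) R)
    (B : Matrix (Fin n) (Fin n) R) : (blockSum A B).det = A.det * B.det := by
  simp [blockSum]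

section Isometry

variable {n : ℕ} {G A B : Matrix (Fin n) (Fin n) ℤ}

theorem isIsometry_one : IsIsometry G 1 := ⟨by simp, by simp⟩

theorem IsIsometry.neg (h : IsIsometry G A) : IsIsometry G (-A) :=
  ⟨by simpa [det_neg] using (isUnit_neg_one.pow _).mul h.1, by simpa using h.2⟩

theorem IsIsometry.mul (hA : IsIsometry G A) (hB : IsIsometry G B) : IsIsometry G (A * B) := by
  refine ⟨by simpa using hA.1.mul hB.1, ?_⟩
  calc (A * B)ᵀ * G * (A * B) = Bᵀ * (Aᵀ * G * A) * B := by simp only [transpose_mul, mul_assoc]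
    _ = G := by rw [hA.2, hB.2]

theorem isIsometry_of_mul_self_eq_one (h : A * A = 1) (hG : Aᵀ * G * A = G) : IsIsometry G A :=
  ⟨isUnit_det_of_left_inverse h, hG⟩

theorem IsIsometry.blockSum {m : ℕ} {G' A' : Matrix (Fin m) (Fin m) ℤ}
    (hA : IsIsometry G A) (hA' : IsIsometry G' A') :
    IsIsometry (blockSum G G') (blockSum A A') := by
  refine ⟨by simpa [det_blockSum] using hA.1.mul hA'.1, ?_⟩
  rw [blockSum_transpose, blockSum_mul, blockSum_mul, hA.2, hA'.2]

theorem isIsometry_blockSwap : IsIsometry (blockSum G G) blockSwap :=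
  isIsometry_of_mul_self_eq_one blockSwap_mul_self
    (by rw [blockSwap_transpose, blockSwap_mul_blockSum_mul_blockSwap])

end Isometry

theorem dsum_eq_blockSum (A : Matrix (Fin 6) (Fin 6) ℤ) (B : Matrix (Fin 16) (Fin 16) ℤ) :
    dsum A B = blockSum A B := by
  ext i j
  refine Fin.addCases (m := 6) (n := 16) (fun i => ?_) (fun i => ?_) i <;>
    refine Fin.addCases (m := 6) (n := 16) (fun j => ?_) (fun j => ?_) j <;>
    simp [dsum]

theorem GramL_eq_blockSum : GramL = blockSum Gram3H (blockSum GramE8 GramE8) := by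
  ext i j
  refine Fin.addCases (m := 6) (n := 16) (fun i => ?_)
    (Fin.addCases (m := 8) (n := 8) (fun i => ?_) (fun i => ?_)) i <;>
  refine Fin.addCases (m := 6) (n := 16) (fun j => ?_)
    (Fin.addCases (m := 8) (n := 8) (fun j => ?_) (fun j => ?_)) j <;>
  simp only [blockSum_natAdd_natAdd, blockSum_castAdd_castAdd, blockSum_castAdd_natAdd,
    blockSum_natAdd_castAdd] <;>
  simp (disch := omega) [GramL, dif_pos, dif_neg, show ∀ k : ℕ, 6 + (k + 8) - 14 = k by omega]

theorem diag2E8_eq_blockSum (a b : ℤ) :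
    diag2E8 a b = blockSum (m := 8) (n := 8) (a • 1) (b • 1) := by
  ext i j
  refine Fin.addCases (m := 8) (n := 8) (fun i => ?_) (fun i => ?_) i <;>
    refine Fin.addCases (m := 8) (n := 8) (fun j => ?_) (fun j => ?_) j <;>
    simp only [blockSum_castAdd_castAdd, blockSum_castAdd_natAdd, blockSum_natAdd_castAdd,
      blockSum_natAdd_natAdd] <;>
    simp [diag2E8, Fin.ext_iff, one_apply] <;> omega

theorem swap2E8_eq_blockSwap : swap2E8 = blockSwap (n := 8) := by
  ext i j
  refine Fin.addCases (m := 8) (n := 8) (fun i => ?_) (fun i => ?_) i <;>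
    refine Fin.addCases (m := 8) (n := 8) (fun j => ?_) (fun j => ?_) j <;>
    simp only [blockSwap, reindex_apply, submatrix_apply, finSumFinEquiv_symm_apply_castAdd,
      finSumFinEquiv_symm_apply_natAdd, fromBlocks_apply₁₁, fromBlocks_apply₁₂, fromBlocks_apply₂₁,
      fromBlocks_apply₂₂] <;>
    simp [swap2E8, Fin.ext_iff, one_apply] <;> (try split_ifs) <;> omega

theorem rho2_mul_self (j : ℕ) : rho2 j * rho2 j = 1 := by
  rcases j with _ | _ | _ | _ | _ | j
  · exact mul_one 1
  · exact mul_one 1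
  · rw [rho2, diag2E8_eq_blockSum]
    exact blockSum_mul_self_eq_one (by simp) (by simp)
  · simp [rho2]
  · rw [rho2, swap2E8_eq_blockSwap, blockSwap_mul_self]
  · exact mul_one 1

theorem isIsometry_rho2 (j : ℕ) : IsIsometry (blockSum GramE8 GramE8) (rho2 j) := by
  rcases j with _ | _ | _ | _ | _ | j
  · exact isIsometry_one
  · exact isIsometry_one
  · rw [rho2, diag2E8_eq_blockSum, neg_one_smul, one_smul]
    exact isIsometry_one.neg.blockSum isIsometry_one
  · exact isIsometry_one.neg
  · rw [rho2, swap2E8_eq_blockSwap]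
    exact isIsometry_blockSwap
  · exact isIsometry_one

theorem commute_rho2_of_ne_two_of_ne_four {j : ℕ} (h2 : j ≠ 2) (h4 : j ≠ 4)
    (M : Matrix (Fin 16) (Fin 16) ℤ) : Commute (rho2 j) M := by
  rcases j with _ | _ | _ | _ | _ | j
  · exact Commute.one_left M
  · exact Commute.one_left M
  · contradiction
  · exact Commute.neg_one_left M
  · contradiction
  · exact Commute.one_left M

theorem commute_rho2 {j₁ j₂ : ℕ} (h : ¬((j₁ = 2 ∧ j₂ = 4) ∨ (j₁ = 4 ∧ j₂ = 2))) :
    Commute (rho2 j₁) (rho2 j₂) := by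
  by_cases hj : j₁ = j₂
  · rw [hj]
  by_cases h₁ : j₁ = 2 ∨ j₁ = 4
  · exact (commute_rho2_of_ne_two_of_ne_four (by omega) (by omega) _).symm
  · exact commute_rho2_of_ne_two_of_ne_four (by omega) (by omega) _

theorem rho1_mul_self (i : ℕ) : rho1 i * rho1 i = 1 := by
  rcases i with _ | _ | _ | _ | _ | _ | _ | _ | i
  all_goals first | decide | exact mul_one 1

theorem isIsometry_rho1 (i : ℕ) : IsIsometry Gram3H (rho1 i) := by
  refine isIsometry_of_mul_self_eq_one (rho1_mul_self i) ?_
  rcases i with _ | _ | _ | _ | _ | _ | _ | _ | i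
  all_goals first | decide | simp [rho1]

theorem tau3H_mul_self : tau3H * tau3H = 1 := by decide

theorem isIsometry_tau3H : IsIsometry Gram3H tau3H :=
  isIsometry_of_mul_self_eq_one tau3H_mul_self (by decide)

theorem conj_mul_self_eq_one {M : Type*} [Monoid M] {t r : M} (ht : t * t = 1) (hr : r * r = 1) :
    t * r * t * (t * r * t) = 1 :=
  calc t * r * t * (t * r * t) = t * (r * (t * t) * r) * t := by simp only [mul_assoc]
    _ = 1 := by rw [ht, mul_one, hr, mul_one, ht]

def x3H : Fin 6 → ℤ := ![1, 1, -1, -1, 0, 0]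
def y3H : Fin 6 → ℤ := ![0, 0, 0, 0, 1, 1]
def z3H : Fin 6 → ℤ := ![1, 1, 1, 1, 0, 0]

theorem rho1_seven_mulVec_x3H : rho1 7 *ᵥ x3H = -x3H := by decide
theorem rho1_seven_mulVec_y3H : rho1 7 *ᵥ y3H = -y3H := by decide
theorem rho1_seven_mulVec_z3H : rho1 7 *ᵥ z3H = z3H := by decide

section Conj

variable {i : ℕ}

-- For these `i`, `τ ρ₁ⁱ τ` acts by one and the same block (`−I` or `−P`) on `H₁` and `H₂`, and
-- `ρ₁⁷` interchanges `H₁` and `H₂`.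
theorem commute_rho1_seven_conj (hi : i ∈ ({1, 3, 4, 6} : Set ℕ)) :
    Commute (rho1 7) (tau3H * rho1 i * tau3H) := by
  unfold Commute SemiconjBy
  obtain rfl | rfl | rfl | rfl := hi <;> decide

theorem conj_rho1_mulVec_x3H (hi : i ∈ ({1, 3, 4, 6} : Set ℕ)) :
    (tau3H * rho1 i * tau3H) *ᵥ x3H = -x3H := by
  obtain rfl | rfl | rfl | rfl := hi <;> decide

theorem conj_rho1_mulVec_y3H (hi : i ∈ ({1, 3, 4, 6} : Set ℕ)) :
    (tau3H * rho1 i * tau3H) *ᵥ y3H = y3H := by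
  obtain rfl | rfl | rfl | rfl := hi <;> decide

theorem conj_rho1_mulVec_z3H (hi : i ∈ ({1, 3, 4, 6} : Set ℕ)) :
    (tau3H * rho1 i * tau3H) *ᵥ z3H = -z3H := by
  obtain rfl | rfl | rfl | rfl := hi <;> decide

end Conj

theorem x_eq_append : w22 0 + w22 1 - w22 2 - w22 3 = Fin.append x3H (0 : Fin 16 → ℤ) := by
  decide

theorem y_eq_append : w22 4 + w22 5 = Fin.append y3H (0 : Fin 16 → ℤ) := by
  decide

theorem z_eq_append : w22 0 + w22 1 + w22 2 + w22 3 = Fin.append z3H (0 : Fin 16 → ℤ) := by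
  decide

theorem gram3H_values :
    x3H ⬝ᵥ Gram3H *ᵥ x3H = 4 ∧ y3H ⬝ᵥ Gram3H *ᵥ y3H = 2 ∧ z3H ⬝ᵥ Gram3H *ᵥ z3H = 4 ∧
      x3H ⬝ᵥ Gram3H *ᵥ y3H = 0 ∧ x3H ⬝ᵥ Gram3H *ᵥ z3H = 0 ∧ y3H ⬝ᵥ Gram3H *ᵥ z3H = 0 := by
  decide

theorem GramL_append_zero (v w : Fin 6 → ℤ) :
    Fin.append v (0 : Fin 16 → ℤ) ⬝ᵥ GramL *ᵥ Fin.append w (0 : Fin 16 → ℤ) =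
      v ⬝ᵥ Gram3H *ᵥ w := by
  rw [GramL_eq_blockSum, blockSum_mulVec_append, mulVec_zero, append_dotProduct_append,
    dotProduct_zero, add_zero]

theorem intCast_dotProduct_mulVec {ι : Type*} [Fintype ι] (G : Matrix ι ι ℤ) (v w : ι → ℤ) :
    (fun i => (v i : ℝ)) ⬝ᵥ G.map (Int.cast : ℤ → ℝ) *ᵥ (fun i => (w i : ℝ)) =
      ((v ⬝ᵥ G *ᵥ w : ℤ) : ℝ) := by
  rw [← eq_intCast (Int.castRingHom ℝ), RingHom.map_dotProduct]
  congr 1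
  ext i
  exact ((Int.castRingHom ℝ).map_mulVec G w i).symm

theorem stmt13_general (i₂ j₁ j₂ : ℕ)
    (hi₂ : i₂ ∈ ({1, 3, 4, 6} : Set ℕ))
    (hj : ¬((j₁ = 2 ∧ j₂ = 4) ∨ (j₁ = 4 ∧ j₂ = 2)))
    (σ₁ σ₂ : Matrix (Fin 22) (Fin 22) ℤ)
    (hσ₁ : σ₁ = dsum (rho1 7) (rho2 j₁))
    (hσ₂ : σ₂ = dsum (tau3H * rho1 i₂ * tau3H) (rho2 j₂))
    (x y z : Fin 22 → ℤ)
    (hx : x = w22 0 + w22 1 - w22 2 - w22 3)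
    (hy : y = w22 4 + w22 5)
    (hz : z = w22 0 + w22 1 + w22 2 + w22 3) :
    IsIsometry GramL σ₁ ∧ IsIsometry GramL σ₂ ∧
    σ₁ * σ₁ = 1 ∧ σ₂ * σ₂ = 1 ∧ σ₁ * σ₂ = σ₂ * σ₁ ∧
    σ₁.mulVec x = -x ∧ σ₁.mulVec y = -y ∧ σ₁.mulVec z = z ∧
    σ₂.mulVec x = -x ∧ σ₂.mulVec y = y ∧ σ₂.mulVec z = -z ∧
    (let xR : Fin 22 → ℝ := fun i => (x i : ℝ)
     let yR : Fin 22 → ℝ := Real.sqrt 2 • fun i => (y i : ℝ)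
     let zR : Fin 22 → ℝ := fun i => (z i : ℝ)
     xR ⬝ᵥ GramLR.mulVec xR = 4 ∧ yR ⬝ᵥ GramLR.mulVec yR = 4 ∧
     zR ⬝ᵥ GramLR.mulVec zR = 4 ∧ xR ⬝ᵥ GramLR.mulVec yR = 0 ∧
     xR ⬝ᵥ GramLR.mulVec zR = 0 ∧ yR ⬝ᵥ GramLR.mulVec zR = 0) := by
  rw [dsum_eq_blockSum] at hσ₁ hσ₂
  rw [x_eq_append] at hx
  rw [y_eq_append] at hy
  rw [z_eq_append] at hz
  subst hσ₁ hσ₂ hx hy hz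
  obtain ⟨hxx, hyy, hzz, hxy, hxz, hyz⟩ := gram3H_values
  have hsqrt : Real.sqrt 2 * Real.sqrt 2 = 2 := Real.mul_self_sqrt zero_le_two
  refine ⟨?_, ?_, blockSum_mul_self_eq_one (rho1_mul_self 7) (rho2_mul_self j₁),
    blockSum_mul_self_eq_one (conj_mul_self_eq_one tau3H_mul_self (rho1_mul_self i₂))
      (rho2_mul_self j₂),
    (commute_rho1_seven_conj hi₂).blockSum (commute_rho2 hj), ?_, ?_, ?_, ?_, ?_, ?_, ?_⟩
  · rw [GramL_eq_blockSum]
    exact (isIsometry_rho1 7).blockSum (isIsometry_rho2 j₁)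
  · rw [GramL_eq_blockSum]
    exact ((isIsometry_tau3H.mul (isIsometry_rho1 i₂)).mul isIsometry_tau3H).blockSum
      (isIsometry_rho2 j₂)
  · rw [blockSum_mulVec_append, mulVec_zero, rho1_seven_mulVec_x3H, ← append_neg, neg_zero]
  · rw [blockSum_mulVec_append, mulVec_zero, rho1_seven_mulVec_y3H, ← append_neg, neg_zero]
  · rw [blockSum_mulVec_append, mulVec_zero, rho1_seven_mulVec_z3H]
  · rw [blockSum_mulVec_append, mulVec_zero, conj_rho1_mulVec_x3H hi₂, ← append_neg, neg_zero]
  · rw [blockSum_mulVec_append, mulVec_zero, conj_rho1_mulVec_y3H hi₂]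
  · rw [blockSum_mulVec_append, mulVec_zero, conj_rho1_mulVec_z3H hi₂, ← append_neg, neg_zero]
  · simp only [GramLR, mulVec_smul, dotProduct_smul, smul_dotProduct, intCast_dotProduct_mulVec,
      GramL_append_zero, hxx, hyy, hzz, hxy, hxz, hyz, smul_eq_mul]
    refine ⟨by norm_num, ?_, by norm_num, by simp, by simp, by simp⟩
    rw [← mul_assoc, hsqrt]
    norm_num

theorem stmt13 (i₂ j₁ j₂ : ℕ)
    (hi₂ : i₂ ∈ ({1, 3, 4, 6} : Set ℕ))
    (hj₁ : j₁ ∈ Finset.Icc 1 4) (hj₂ : j₂ ∈ Finset.Icc 1 4)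
    (hj : ¬((j₁ = 2 ∧ j₂ = 4) ∨ (j₁ = 4 ∧ j₂ = 2)))
    (σ₁ σ₂ : Matrix (Fin 22) (Fin 22) ℤ)
    (hσ₁ : σ₁ = dsum (rho1 7) (rho2 j₁))
    (hσ₂ : σ₂ = dsum (tau3H * rho1 i₂ * tau3H) (rho2 j₂))
    (x y z : Fin 22 → ℤ)
    (hx : x = w22 0 + w22 1 - w22 2 - w22 3)
    (hy : y = w22 4 + w22 5)
    (hz : z = w22 0 + w22 1 + w22 2 + w22 3) :
    IsIsometry GramL σ₁ ∧ IsIsometry GramL σ₂ ∧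
    σ₁ * σ₁ = 1 ∧ σ₂ * σ₂ = 1 ∧ σ₁ * σ₂ = σ₂ * σ₁ ∧
    σ₁.mulVec x = -x ∧ σ₁.mulVec y = -y ∧ σ₁.mulVec z = z ∧
    σ₂.mulVec x = -x ∧ σ₂.mulVec y = y ∧ σ₂.mulVec z = -z ∧
    (let xR : Fin 22 → ℝ := fun i => (x i : ℝ)
     let yR : Fin 22 → ℝ := Real.sqrt 2 • fun i => (y i : ℝ)
     let zR : Fin 22 → ℝ := fun i => (z i : ℝ)
     xR ⬝ᵥ GramLR.mulVec xR = 4 ∧ yR ⬝ᵥ GramLR.mulVec yR = 4 ∧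
     zR ⬝ᵥ GramLR.mulVec zR = 4 ∧ xR ⬝ᵥ GramLR.mulVec yR = 0 ∧
     xR ⬝ᵥ GramLR.mulVec zR = 0 ∧ yR ⬝ᵥ GramLR.mulVec zR = 0) :=
  stmt13_general i₂ j₁ j₂ hi₂ hj σ₁ σ₂ hσ₁ hσ₂ x y z hx hy hz
end
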